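/- For the VSSBDF2 characteristic roots with fixed λ < 0, if the time steps grow so that ω = dt_now/dt_old is bounded and dt_now = t^{n+1} - t^n with t^n ~ e^{μn} for some μ > 0, then the root magnitudes |ρ±| decay like 1/√(t^n) as n → ∞; more precisely |ρ±| · √(dt_now) converges to a finite nonzero limit determined by λ and the limiting step ratio. -/

import Mathlib

/-!
Once `dt_now` is large, the leading coefficient `A = (1 + 2ω)/(1 + ω) - λ dt_now` of the
characteristic polynomial `A ρ² - (1 + ω) ρ + ω²/(1 + ω)` grows like `-λ dt_now`, so the
discriminant becomes negative and `ρ±` are complex conjugates. Then `|ρ±|²` is the product of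
the roots, `ω² / ((1 + ω) A) ~ ω² / ((1 + ω)(-λ) dt_now)`. Exponential steps `t^n = e^{μn}` have
the constant ratio `ω = e^μ` and `dt_now → ∞`, so `|ρ±| √dt_now → √(e^{2μ} / ((1 + e^μ)(-λ)))`.
-/

open Filter Topology

/-- The VSSBDF2 characteristic root (± branch, via the principal complex square root
of the discriminant) for step sizes dt_old, dt_now and parameter λ. -/
noncomputable def vssbdf2Root (lam dtold dtnow : ℝ) (sign : ℝ) : ℂ :=
  let ω := dtnow/dtold
  let A : ℝ := (1 + 2*ω)/(1 + ω) - lam * dtnow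
  let disc : ℝ := (1 + ω)^2 - (4*ω^2/(1 + ω)) * A
  (((1 + ω : ℝ) : ℂ) + (sign : ℂ) * ((disc : ℂ) ^ ((1:ℂ)/2))) / (2 * (A : ℂ))

lemma ofReal_cpow_one_half_of_nonpos {x : ℝ} (hx : x ≤ 0) :
    (x : ℂ) ^ ((1 : ℂ) / 2) = (√(-x) : ℂ) * Complex.I := by
  have hroot : ((-x : ℝ) : ℂ) ^ ((1 : ℂ) / 2) = (√(-x) : ℂ) := by
    rw [Real.sqrt_eq_rpow, Complex.ofReal_cpow (by linarith)]
    norm_num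
  rw [Complex.ofReal_cpow_of_nonpos hx, ← Complex.ofReal_neg, hroot,
    show Real.pi * Complex.I * ((1 : ℂ) / 2) = Real.pi / 2 * Complex.I by ring,
    Complex.exp_pi_div_two_mul_I]

lemma norm_ofReal_add_mul_cpow_one_half_of_nonpos (a d s : ℝ) (hd : d ≤ 0) (hs : s ^ 2 = 1) :
    ‖(a : ℂ) + s * (d : ℂ) ^ ((1 : ℂ) / 2)‖ = √(a ^ 2 - d) := by
  have hsq : (s * √(-d)) ^ 2 = -d := by rw [mul_pow, hs, one_mul, Real.sq_sqrt (by linarith)]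
  rw [ofReal_cpow_one_half_of_nonpos hd, ← mul_assoc, ← Complex.ofReal_mul,
    Complex.norm_add_mul_I, hsq, sub_eq_add_neg]

lemma norm_vssbdf2Root_of_disc_neg {lam dtold dtnow w s : ℝ} (hω : dtnow / dtold = w)
    (hs : s ^ 2 = 1) (hA : 0 < (1 + 2 * w) / (1 + w) - lam * dtnow)
    (hdisc : (1 + w) ^ 2 - 4 * w ^ 2 / (1 + w) * ((1 + 2 * w) / (1 + w) - lam * dtnow) < 0) :
    ‖vssbdf2Root lam dtold dtnow s‖
      = √(w ^ 2 / ((1 + w) * ((1 + 2 * w) / (1 + w) - lam * dtnow))) := by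
  set A := (1 + 2 * w) / (1 + w) - lam * dtnow
  have hw : 1 + w ≠ 0 := by
    rintro h
    simp [h] at hdisc
  have h2A : ‖(2 * A : ℂ)‖ = √((2 * A) ^ 2) := by
    rw [Real.sqrt_sq (by positivity)]
    exact_mod_cast Complex.norm_of_nonneg (by positivity)
  simp only [vssbdf2Root, hω]
  rw [norm_div, norm_ofReal_add_mul_cpow_one_half_of_nonpos _ _ _ hdisc.le hs, h2A,
    ← Real.sqrt_div' _ (by positivity)]
  congr 1
  field_simp
  ring

lemma tendsto_norm_vssbdf2Root_mul_sqrt {ι : Type*} {l : Filter ι} {lam w s : ℝ}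
    {dtold dtnow : ι → ℝ} (hlam : lam < 0) (hw : 0 < w) (hs : s ^ 2 = 1)
    (hω : ∀ i, dtnow i / dtold i = w) (hdt : Tendsto dtnow l atTop) :
    Tendsto (fun i => ‖vssbdf2Root lam (dtold i) (dtnow i) s‖ * √(dtnow i)) l
      (𝓝 √(w ^ 2 / ((1 + w) * -lam))) := by
  set c := (1 + 2 * w) / (1 + w)
  have hA : Tendsto (fun i => c - lam * dtnow i) l atTop :=
    tendsto_atTop_add_const_left l c ((hdt.const_mul_atTop (neg_pos.2 hlam)).congr fun i => by ring)
  have hk : 0 < 4 * w ^ 2 / (1 + w) := by positivity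
  have hdisc : ∀ᶠ i in l, (1 + w) ^ 2 - 4 * w ^ 2 / (1 + w) * (c - lam * dtnow i) < 0 := by
    filter_upwards [(hA.const_mul_atTop hk).eventually_gt_atTop ((1 + w) ^ 2)] with i hi
    linarith
  have hA_div : Tendsto (fun i => (c - lam * dtnow i) / dtnow i) l (𝓝 (-lam)) := by
    have := (tendsto_const_nhds (x := c)).div_atTop hdt |>.sub_const lam
    rw [zero_sub] at this
    refine this.congr' ?_
    filter_upwards [hdt.eventually_gt_atTop 0] with i hi
    field_simp
  have hlim := ((tendsto_const_nhds (x := w ^ 2)).div (hA_div.const_mul (1 + w))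
    (mul_pos (by linarith) (neg_pos.2 hlam)).ne').sqrt
  refine hlim.congr' ?_
  filter_upwards [hdisc, hA.eventually_gt_atTop 0] with i hdisc_i hA_i
  rw [norm_vssbdf2Root_of_disc_neg (hω i) hs hA_i hdisc_i, ← Real.sqrt_mul (by positivity),
    Pi.div_apply, mul_div_assoc', div_div_eq_mul_div, div_mul_eq_mul_div]

lemma exp_mul_add_one_sub_exp_mul (μ x : ℝ) :
    Real.exp (μ * (x + 1)) - Real.exp (μ * x) = Real.exp (μ * x) * (Real.exp μ - 1) := by
  rw [mul_add, mul_one, Real.exp_add]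
  ring

lemma exp_mul_add_two_sub_exp_mul_add_one (μ x : ℝ) :
    Real.exp (μ * (x + 2)) - Real.exp (μ * (x + 1))
      = Real.exp (μ * x) * (Real.exp μ - 1) * Real.exp μ := by
  rw [show x + 2 = x + 1 + 1 by ring, exp_mul_add_one_sub_exp_mul, mul_add, mul_one, Real.exp_add]
  ring

lemma exp_step_ratio (μ x : ℝ) (hμ : μ ≠ 0) :
    (Real.exp (μ * (x + 2)) - Real.exp (μ * (x + 1)))
      / (Real.exp (μ * (x + 1)) - Real.exp (μ * x)) = Real.exp μ := by
  have : Real.exp μ - 1 ≠ 0 := sub_ne_zero.2 ((Real.exp_eq_one_iff μ).not.2 hμ)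
  rw [exp_mul_add_two_sub_exp_mul_add_one, exp_mul_add_one_sub_exp_mul]
  field_simp

lemma tendsto_exp_step_atTop {μ : ℝ} (hμ : 0 < μ) :
    Tendsto (fun n : ℕ => Real.exp (μ * (n + 2)) - Real.exp (μ * (n + 1))) atTop atTop := by
  simp only [exp_mul_add_two_sub_exp_mul_add_one]
  refine Tendsto.atTop_mul_const (Real.exp_pos μ) <|
    Tendsto.atTop_mul_const (sub_pos.2 (Real.one_lt_exp_iff.2 hμ)) ?_
  exact Real.tendsto_exp_atTop.comp (tendsto_natCast_atTop_atTop.const_mul_atTop hμ)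

/-- With exponentially growing time steps t^n = e^{μn} (so ω = dt_now/dt_old is bounded,
in fact constant equal to e^μ) and fixed λ < 0, the magnitudes of the VSSBDF2 roots
decay like 1/√(t^n): the products |ρ±|·√(dt_now) converge to a common finite nonzero
limit determined by λ and the limiting step ratio. -/
theorem vssbdf2_roots_decay_exponential_steps (lam μ : ℝ) (hlam : lam < 0) (hμ : 0 < μ) :
    ∃ L > 0,
      Tendsto (fun n : ℕ =>
          ‖vssbdf2Root lam
              (Real.exp (μ*(n+1)) - Real.exp (μ*n))
              (Real.exp (μ*(n+2)) - Real.exp (μ*(n+1))) 1‖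
            * Real.sqrt (Real.exp (μ*(n+2)) - Real.exp (μ*(n+1))))
        atTop (nhds L) ∧
      Tendsto (fun n : ℕ =>
          ‖vssbdf2Root lam
              (Real.exp (μ*(n+1)) - Real.exp (μ*n))
              (Real.exp (μ*(n+2)) - Real.exp (μ*(n+1))) (-1)‖
            * Real.sqrt (Real.exp (μ*(n+2)) - Real.exp (μ*(n+1))))
        atTop (nhds L) := by
  have hratio (n : ℕ) := exp_step_ratio μ n hμ.ne'
  have hlimit (s : ℝ) (hs : s ^ 2 = 1) := tendsto_norm_vssbdf2Root_mul_sqrt hlam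
    (Real.exp_pos μ) hs hratio (tendsto_exp_step_atTop hμ)
  refine ⟨_, ?_, hlimit 1 (by norm_num), hlimit (-1) (by norm_num)⟩
  exact Real.sqrt_pos.2 (div_pos (by positivity) (mul_pos (by positivity) (neg_pos.2 hlam)))
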